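/- arXiv:2604.00740 — 4 statements merged into one kernel-verified Lean document; each statement's English description precedes it below -/
import Mathlib

section
/- Let α ≠ 0, m ∈ ℝ with m ≠ n (or m = ∞), and f(x) = −α log|x| on ℝⁿ \ {0}. The tensor Ric_f^m = D²f − (df⊗df)/(m−n) (with the last term zero if m = ∞) is positive semidefinite at every x ≠ 0 if and only if α < 0 and n + α ≤ m ≤ n. -/
/-!
Writing `K = -α/|x|²` and `c = α/(m−n)` (or `0`), the quadratic form of `Ric_f^m(x)` is
`v ↦ K (|v|² + (c − 2)⟨x, v⟩²/|x|²)`. On `x^⊥` (nonzero since `n ≥ 2`) it is `K|v|²`, and on `x`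
it is `K(c − 1)|x|²`; by Cauchy–Schwarz these two directions are the extreme ones. So the form is
positive semidefinite for all `x` iff `α < 0` and `c ≥ 1`, and for `α < 0` the inequality
`α/(m − n) ≥ 1` says exactly `m − n < 0` and `α ≤ m − n`.
-/

open RealInnerProductSpace

theorem EuclideanSpace.sum_sum_mul_one_add_outer_mul_eq {ι : Type*} [Fintype ι] [DecidableEq ι]
    (K C h : ℝ) (x v : EuclideanSpace ℝ ι) :
    ∑ i, ∑ j, v i * (K * ((if i = j then (1:ℝ) else 0) + C * x i * x j / h)) * v j
      = K * (‖v‖ ^ 2 + C / h * ⟪x, v⟫ ^ 2) := by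
  have hentry : ∀ i j, v i * (K * ((if i = j then (1:ℝ) else 0) + C * x i * x j / h)) * v j
      = (if i = j then K * (v i * v j) else 0) + C / h * K * ((x i * v i) * (x j * v j)) := by
    intro i j
    split_ifs <;> ring
  have hnorm : ‖v‖ ^ 2 = ∑ i, v i * v i := by
    rw [← real_inner_self_eq_norm_sq, PiLp.inner_apply]
    simp only [RCLike.inner_apply, conj_trivial]
  have hinner : ⟪x, v⟫ = ∑ i, x i * v i := by
    rw [PiLp.inner_apply]
    simp only [RCLike.inner_apply, conj_trivial, mul_comm]
  simp only [hentry, Finset.sum_add_distrib, Finset.sum_ite_eq, Finset.mem_univ, if_true,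
    ← Finset.mul_sum, ← Finset.sum_mul, hnorm, hinner]
  ring

theorem forall_nonneg_mul_norm_sq_mul_norm_sq_add_inner_sq_iff {E : Type*}
    [NormedAddCommGroup E] [InnerProductSpace ℝ E] (hE : 2 ≤ Module.finrank ℝ E) {a k : ℝ}
    (ha : a ≠ 0) :
    (∀ x : E, x ≠ 0 → ∀ v, 0 ≤ a * (‖x‖ ^ 2 * ‖v‖ ^ 2 + k * ⟪x, v⟫ ^ 2)) ↔ 0 < a ∧ -1 ≤ k := by
  constructor
  · intro H
    have : FiniteDimensional ℝ E := Module.finite_of_finrank_pos (by omega)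
    set b := stdOrthonormalBasis ℝ E
    have hb := b.orthonormal
    let e₀ := b ⟨0, by omega⟩
    let e₁ := b ⟨1, by omega⟩
    have he₀ : ‖e₀‖ = 1 := hb.1 _
    have he₁ : ‖e₁‖ = 1 := hb.1 _
    have he₀₁ : ⟪e₀, e₁⟫ = 0 := hb.2 (by simp [Fin.ext_iff])
    have he₀₀ : ⟪e₀, e₀⟫ = 1 := by rw [real_inner_self_eq_norm_sq, he₀, one_pow]
    have he₀_ne : e₀ ≠ 0 := by rw [← norm_ne_zero_iff, he₀]; exact one_ne_zero
    have ha_pos : 0 < a := by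
      have := H e₀ he₀_ne e₁
      rw [he₀, he₁, he₀₁] at this
      exact lt_of_le_of_ne (by simpa using this) (Ne.symm ha)
    have := H e₀ he₀_ne e₀
    rw [he₀, he₀₀] at this
    exact ⟨ha_pos, by nlinarith⟩
  · rintro ⟨ha_pos, hk⟩ x - v
    have hcs := real_inner_mul_inner_self_le x v
    rw [real_inner_self_eq_norm_sq, real_inner_self_eq_norm_sq] at hcs
    exact mul_nonneg ha_pos.le (by nlinarith [sq_nonneg ⟪x, v⟫])

theorem EReal.one_le_ite_top_div_sub_iff {α n : ℝ} (hα : α < 0) {m : EReal} (hm : m ≠ n)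
    (hm' : m ≠ ⊥) :
    1 ≤ (if m = ⊤ then (0:ℝ) else α / (m.toReal - n)) ↔ (n : EReal) + α ≤ m ∧ m ≤ n := by
  induction m using EReal.rec with
  | bot => exact absurd rfl hm'
  | top => simp
  | coe r =>
    have hrn : r ≠ n := fun h => hm (by rw [h])
    simp only [EReal.coe_ne_top, if_false, EReal.toReal_coe, ← EReal.coe_add,
      EReal.coe_le_coe_iff]
    rcases lt_or_gt_of_ne (sub_ne_zero.mpr hrn) with hneg | hpos
    · rw [one_le_div_of_neg hneg]
      constructor
      · intro h; constructor <;> linarith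
      · intro h; linarith [h.1]
    · have : α / (r - n) < 0 := div_neg_of_neg_of_pos hα hpos
      constructor <;> intro h
      · linarith
      · linarith [h.2]

/-- For `f(x) = −α log|x|` on `ℝⁿ \ {0}` (`α ≠ 0`) and `m ∈ ℝ ∪ {∞}` with `m ≠ n`,
the tensor `Ric_f^m = D²f − (df⊗df)/(m−n)` (last term zero when `m = ∞`), whose entries are
`−(α/|x|²)(δ_{ij} + (α/(m−n) − 2) x_i x_j/|x|²)`, is positive semidefinite at every `x ≠ 0`
if and only if `α < 0` and `n + α ≤ m ≤ n`. -/
theorem stmt3 (n : ℕ) (hn : 2 ≤ n) (α : ℝ) (hα : α ≠ 0)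
    (m : EReal) (hm : m ≠ ((n : ℝ) : EReal)) (hm' : m ≠ ⊥) :
    (∀ x : EuclideanSpace ℝ (Fin n), x ≠ 0 → ∀ v : EuclideanSpace ℝ (Fin n),
      0 ≤ ∑ i : Fin n, ∑ j : Fin n,
        v i * (-(α / ‖x‖ ^ 2) *
          ((if i = j then (1:ℝ) else 0) +
            ((if m = ⊤ then (0:ℝ) else α / (m.toReal - (n : ℝ))) - 2) *
              x i * x j / ‖x‖ ^ 2)) * v j)
    ↔ (α < 0 ∧ ((n : ℝ) : EReal) + ((α : ℝ) : EReal) ≤ m ∧ m ≤ ((n : ℝ) : EReal)) := by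
  set c : ℝ := if m = ⊤ then (0:ℝ) else α / (m.toReal - (n : ℝ))
  have hform : ∀ x : EuclideanSpace ℝ (Fin n), x ≠ 0 → ∀ v,
      (0 ≤ ∑ i, ∑ j, v i * (-(α / ‖x‖ ^ 2) * ((if i = j then (1:ℝ) else 0) +
          (c - 2) * x i * x j / ‖x‖ ^ 2)) * v j) ↔
        0 ≤ -α * (‖x‖ ^ 2 * ‖v‖ ^ 2 + (c - 2) * ⟪x, v⟫ ^ 2) := by
    intro x hx v
    have hscale : -(α / ‖x‖ ^ 2) * (‖v‖ ^ 2 + (c - 2) / ‖x‖ ^ 2 * ⟪x, v⟫ ^ 2) =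
        -α * (‖x‖ ^ 2 * ‖v‖ ^ 2 + (c - 2) * ⟪x, v⟫ ^ 2) / ‖x‖ ^ 4 := by
      field_simp
    rw [EuclideanSpace.sum_sum_mul_one_add_outer_mul_eq, hscale, le_div_iff₀ (by positivity),
      zero_mul]
  rw [forall₂_congr fun x hx => forall_congr' (hform x hx),
    forall_nonneg_mul_norm_sq_mul_norm_sq_add_inner_sq_iff (by rwa [finrank_euclideanSpace_fin])
      (neg_ne_zero.mpr hα), neg_pos]
  refine and_congr_right fun hα_neg => ?_
  rw [← EReal.one_le_ite_top_div_sub_iff hα_neg hm hm']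
  constructor <;> intro h <;> linarith
end

section
/- Let γ < 1, n ≥ 3, α ∈ ℝ, and define u(x) = (R² − d_g(x,O)²)/(2(n+α)) on Ω = {x : d_g(x,O) < R}, where d_g(x,O) = |x|^{1−γ}/(1−γ) and g = |x|^{−2γ}δ. Then u satisfies the weighted equation Δ_g u − g(∇f, ∇u) = −1 in Ω, where f(x) = −α log d_g(x,O), u = 0 on {d_g(x,O) = R}, and |∇u|_g² = d_g(x,O)²/(n+α)² (so ∂u/∂ν = −R/(n+α) on the boundary). -/
/-!
Every function involved is radial. For `v(y) = G(|y|²)` one has `∇v = 2 G'(|x|²) x` and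
`Δv = 2n G'(|x|²) + 4 |x|² G''(|x|²)`. With `u = a - b (|y|²)^(1-γ)`, `φ = -γ log |y|` and
`f = -α(1-γ) log |y| + const`, each of `Δu`, `Du·Dφ`, `Df·Du` is a constant multiple of
`|x|^(-2γ)`, which the conformal factor `|x|^(2γ)` cancels; the constants add up to `-1`
because `b = 1 / (2 (1-γ)² (n+α))`.
-/

open RealInnerProductSpace

/-- The Euclidean Laplacian: sum of second partial derivatives. -/
noncomputable def euclLap {n : ℕ} (u : EuclideanSpace ℝ (Fin n) → ℝ)
    (x : EuclideanSpace ℝ (Fin n)) : ℝ :=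
  ∑ i : Fin n,
    fderiv ℝ (fun y => fderiv ℝ u y (EuclideanSpace.single i 1)) x (EuclideanSpace.single i 1)

open Filter Topology

theorem hasDerivAt_const_sub_mul_rpow (a b p : ℝ) {t : ℝ} (ht : t ≠ 0) :
    HasDerivAt (fun t => a - b * t ^ p) (-(b * p) * t ^ (p - 1)) t :=
  ((Real.hasDerivAt_rpow_const (Or.inl ht)).const_mul b).const_sub a |>.congr_deriv (by ring)

section Radial

variable {E : Type*} [NormedAddCommGroup E] [InnerProductSpace ℝ E] {x : E}

theorem hasFDerivAt_comp_norm_sq {G : ℝ → ℝ} {G' : ℝ} (hG : HasDerivAt G G' (‖x‖ ^ 2)) :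
    HasFDerivAt (fun y => G (‖y‖ ^ 2)) ((2 * G') • innerSL ℝ x) x := by
  refine (hG.comp_hasFDerivAt x (hasStrictFDerivAt_norm_sq x).hasFDerivAt).congr_fderiv ?_
  ext v
  simp
  ring

variable [CompleteSpace E]

theorem hasGradientAt_comp_norm_sq {G : ℝ → ℝ} {G' : ℝ} (hG : HasDerivAt G G' (‖x‖ ^ 2)) :
    HasGradientAt (fun y => G (‖y‖ ^ 2)) ((2 * G') • x) x := by
  rw [hasGradientAt_iff_hasFDerivAt]
  refine (hasFDerivAt_comp_norm_sq hG).congr_fderiv ?_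
  ext v
  simp [InnerProductSpace.toDual_apply_apply]

theorem gradient_const_sub_mul_rpow_norm_sq (a b p : ℝ) (hx : x ≠ 0) :
    gradient (fun y => a - b * (‖y‖ ^ 2) ^ p) x = (-2 * b * p * (‖x‖ ^ 2) ^ (p - 1)) • x := by
  rw [(hasGradientAt_comp_norm_sq (hasDerivAt_const_sub_mul_rpow a b p (by positivity))).gradient]
  congr 1
  ring

theorem gradient_mul_log_norm_add (c e : ℝ) (hx : x ≠ 0) :
    gradient (fun y => c * Real.log ‖y‖ + e) x = (c / ‖x‖ ^ 2) • x := by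
  have hlog : (fun y : E => c * Real.log ‖y‖ + e) = fun y => c / 2 * Real.log (‖y‖ ^ 2) + e := by
    ext y
    rw [Real.log_pow]
    push_cast
    ring
  have hs : ‖x‖ ^ 2 ≠ 0 := by positivity
  rw [hlog, (hasGradientAt_comp_norm_sq
    (((Real.hasDerivAt_log hs).const_mul (c / 2)).add_const e)).gradient]
  congr 1
  ring

end Radial

section Laplacian

variable {n : ℕ} {x : EuclideanSpace ℝ (Fin n)}

theorem euclLap_comp_norm_sq {G G' : ℝ → ℝ} {G'' : ℝ}
    (hG : ∀ᶠ t in 𝓝 (‖x‖ ^ 2), HasDerivAt G (G' t) t) (hG' : HasDerivAt G' G'' (‖x‖ ^ 2)) :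
    euclLap (fun y => G (‖y‖ ^ 2)) x = 2 * n * G' (‖x‖ ^ 2) + 4 * ‖x‖ ^ 2 * G'' := by
  have hpartial (i : Fin n) :
      (fun y => fderiv ℝ (fun y => G (‖y‖ ^ 2)) y (EuclideanSpace.single i 1))
        =ᶠ[𝓝 x] fun y => 2 * G' (‖y‖ ^ 2) * y i := by
    have hnear : ∀ᶠ y in 𝓝 x, HasDerivAt G (G' (‖y‖ ^ 2)) (‖y‖ ^ 2) :=
      (continuous_norm.pow 2).continuousAt.eventually hG
    filter_upwards [hnear] with y hy
    rw [(hasFDerivAt_comp_norm_sq hy).fderiv]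
    simp [EuclideanSpace.inner_single_right]
  have hsecond (i : Fin n) : fderiv ℝ (fun y => 2 * G' (‖y‖ ^ 2) * y i) x
      (EuclideanSpace.single i 1) = 2 * G' (‖x‖ ^ 2) + 4 * G'' * x i ^ 2 := by
    have h : HasFDerivAt (fun y => 2 * G' (‖y‖ ^ 2) * y i) _ x :=
      ((hasFDerivAt_comp_norm_sq hG').const_mul 2).mul (PiLp.hasFDerivAt_apply (𝕜 := ℝ) 2 x i)
    rw [h.fderiv]
    simp [EuclideanSpace.inner_single_right]
    ring
  unfold euclLap
  simp_rw [(hpartial _).fderiv_eq, hsecond]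
  simp only [Finset.sum_add_distrib, Finset.sum_const, Finset.card_univ, Fintype.card_fin,
    nsmul_eq_mul, ← Finset.mul_sum, ← EuclideanSpace.real_norm_sq_eq]
  ring

theorem euclLap_const_sub_mul_rpow_norm_sq (a b p : ℝ) (hx : x ≠ 0) :
    euclLap (fun y => a - b * (‖y‖ ^ 2) ^ p) x
      = -2 * b * p * (n + 2 * (p - 1)) * (‖x‖ ^ 2) ^ (p - 1) := by
  have hs : 0 < ‖x‖ ^ 2 := by positivity
  have hG : ∀ᶠ t in 𝓝 (‖x‖ ^ 2),
      HasDerivAt (fun t => a - b * t ^ p) (-(b * p) * t ^ (p - 1)) t := by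
    filter_upwards [eventually_ne_nhds hs.ne'] with t ht
    exact hasDerivAt_const_sub_mul_rpow a b p ht
  have hG' := (Real.hasDerivAt_rpow_const (p := p - 1) (Or.inl hs.ne')).const_mul (-(b * p))
  rw [euclLap_comp_norm_sq hG hG', Real.rpow_sub_one hs.ne' (p - 1)]
  field_simp
  ring

end Laplacian

theorem stmt10_general (n : ℕ) (γ α R : ℝ) (hγ : γ < 1) (hα : (n : ℝ) + α ≠ 0)
    (d u f φ : EuclideanSpace ℝ (Fin n) → ℝ)
    (hd : d = fun y => ‖y‖ ^ (1 - γ) / (1 - γ))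
    (hu : u = fun y => (R ^ 2 - d y ^ 2) / (2 * ((n : ℝ) + α)))
    (hf : f = fun y => -α * Real.log (d y))
    (hφ : φ = fun y => -γ * Real.log ‖y‖) :
    ∀ x : EuclideanSpace ℝ (Fin n), x ≠ 0 →
      (d x < R →
        ‖x‖ ^ (2 * γ) * (euclLap u x + ((n : ℝ) - 2) * ⟪gradient u x, gradient φ x⟫)
          - ‖x‖ ^ (2 * γ) * ⟪gradient f x, gradient u x⟫ = -1) ∧
      (d x = R → u x = 0) ∧
      ‖x‖ ^ (2 * γ) * ‖gradient u x‖ ^ 2 = d x ^ 2 / ((n : ℝ) + α) ^ 2 := by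
  intro x hx
  have hγ' : 1 - γ ≠ 0 := by linarith
  have hd_sq (y : EuclideanSpace ℝ (Fin n)) : d y ^ 2 = (‖y‖ ^ 2) ^ (1 - γ) / (1 - γ) ^ 2 := by
    rw [hd, div_pow, Real.rpow_pow_comm (norm_nonneg y)]
  have hu' : u = fun y => R ^ 2 / (2 * (n + α))
      - 1 / (1 - γ) ^ 2 / (2 * (n + α)) * (‖y‖ ^ 2) ^ (1 - γ) := by
    ext y
    simp only [hu, hd_sq]
    ring
  have hφ' : φ = fun y => -γ * Real.log ‖y‖ + 0 := by simp only [hφ, add_zero]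
  have hf' : f =ᶠ[𝓝 x] fun y => -α * (1 - γ) * Real.log ‖y‖ + α * Real.log (1 - γ) := by
    filter_upwards [eventually_ne_nhds hx] with y hy
    simp only [hf, hd]
    rw [Real.log_div (by positivity) hγ', Real.log_rpow (norm_pos_iff.mpr hy)]
    ring
  have hs : 0 < ‖x‖ ^ 2 := by positivity
  have hw : (‖x‖ ^ 2) ^ γ * (‖x‖ ^ 2) ^ (1 - γ - 1) = 1 := by
    rw [← Real.rpow_add hs]; norm_num
  have hw' : (‖x‖ ^ 2) ^ (1 - γ - 1) * ‖x‖ ^ 2 = (‖x‖ ^ 2) ^ (1 - γ) := by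
    rw [Real.rpow_sub_one hs.ne']; field_simp
  refine ⟨fun _ => ?_, fun hR => by simp only [hu, hR, sub_self, zero_div], ?_⟩
  all_goals
    simp only [hf'.gradient_eq, hu', hφ', gradient_mul_log_norm_add _ _ hx,
      gradient_const_sub_mul_rpow_norm_sq _ _ _ hx, euclLap_const_sub_mul_rpow_norm_sq _ _ _ hx,
      Real.rpow_mul (norm_nonneg x), Real.rpow_two, hd_sq, real_inner_smul_left,
      real_inner_smul_right, real_inner_self_eq_norm_sq, norm_smul, Real.norm_eq_abs, mul_pow,
      sq_abs]
    field_simp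
  · linear_combination -((1 - γ) * (n + α)) * hw
  · linear_combination ‖x‖ ^ 2 * (‖x‖ ^ 2) ^ (1 - γ - 1) * hw + hw'

/-- For `γ < 1`, `n ≥ 3`, `g = |x|^{−2γ}δ` (i.e. `g = e^{2φ}δ` with `φ = −γ log|x|`),
`d_g(x,O) = |x|^{1−γ}/(1−γ)` and `u(x) = (R² − d_g(x,O)²)/(2(n+α))` on
`Ω = {d_g(x,O) < R}`: `u` satisfies the weighted equation
`Δ_g u − g(∇f,∇u) = e^{−2φ}(Δu + (n−2)Du·Dφ − Df·Du) = −1` in `Ω`, where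
`f = −α log d_g(x,O)`; `u = 0` on `{d_g(x,O) = R}`; and `|∇u|_g² = e^{−2φ}|Du|² =
d_g(x,O)²/(n+α)²`. -/
theorem stmt10 (n : ℕ) (hn : 3 ≤ n) (γ α R : ℝ) (hγ : γ < 1) (hα : (n : ℝ) + α ≠ 0)
    (d u f φ : EuclideanSpace ℝ (Fin n) → ℝ)
    (hd : d = fun y => ‖y‖ ^ (1 - γ) / (1 - γ))
    (hu : u = fun y => (R ^ 2 - d y ^ 2) / (2 * ((n : ℝ) + α)))
    (hf : f = fun y => -α * Real.log (d y))
    (hφ : φ = fun y => -γ * Real.log ‖y‖) :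
    ∀ x : EuclideanSpace ℝ (Fin n), x ≠ 0 →
      (d x < R →
        ‖x‖ ^ (2 * γ) * (euclLap u x + ((n : ℝ) - 2) * ⟪gradient u x, gradient φ x⟫)
          - ‖x‖ ^ (2 * γ) * ⟪gradient f x, gradient u x⟫ = -1) ∧
      (d x = R → u x = 0) ∧
      ‖x‖ ^ (2 * γ) * ‖gradient u x‖ ^ 2 = d x ^ 2 / ((n : ℝ) + α) ^ 2 :=
  stmt10_general n γ α R hγ hα d u f φ hd hu hf hφ
end

section
/- Let n ≥ 2, 0 < a < b, and set r(x) = |x| on the annulus Ω = {x ∈ ℝⁿ : a < |x| < b}. The function u(x) = ½ (r(x) − a)(b − r(x)) satisfies u'' + ((n−1)/r + w'/w) u' = −1 in the radial variable, where w(r) = r^{1−n}; moreover u(a) = u(b) = 0 and u'(b) = −u'(a) = −(b−a)/2. -/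
/-!
The weight `w = r^{1-n}` has logarithmic derivative `w'/w = -(n-1)/r`, which cancels the
curvature term `(n-1)/r` exactly, so the weighted radial operator collapses to `u ↦ u''`, and the parabola
`½(r-a)(b-r)` has `u'' = -1`.
-/

open Set

noncomputable def torsionProfile (a b r : ℝ) : ℝ := (r - a) * (b - r) / 2

theorem hasDerivAt_torsionProfile (a b r : ℝ) :
    HasDerivAt (torsionProfile a b) ((a + b) / 2 - r) r := by
  have h : HasDerivAt (torsionProfile a b) ((1 * (b - r) + (r - a) * -1) / 2) r :=
    (((hasDerivAt_id' r).sub_const a).mul ((hasDerivAt_id' r).const_sub b)).div_const 2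
  convert h using 1
  ring

theorem deriv_torsionProfile (a b : ℝ) :
    deriv (torsionProfile a b) = fun r => (a + b) / 2 - r :=
  funext fun r => (hasDerivAt_torsionProfile a b r).deriv

theorem deriv_deriv_torsionProfile (a b r : ℝ) :
    deriv (deriv (torsionProfile a b)) r = -1 := by
  rw [deriv_torsionProfile]
  simp

theorem deriv_rpow_const_div_rpow {r : ℝ} (hr : 0 < r) (p : ℝ) :
    deriv (fun x : ℝ => x ^ p) r / r ^ p = p / r := by
  rw [(Real.hasDerivAt_rpow_const (Or.inl hr.ne')).deriv, Real.rpow_sub hr, Real.rpow_one]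
  have : r ^ p ≠ 0 := (Real.rpow_pos_of_pos hr p).ne'
  field_simp

theorem stmt18_general (n : ℕ) (a b : ℝ) (ha : 0 < a)
    (U w : ℝ → ℝ)
    (hU : U = fun r => (r - a) * (b - r) / 2)
    (hw : w = fun r => r ^ ((1 : ℝ) - (n : ℝ))) :
    (∀ r ∈ Ioo a b,
      deriv (deriv U) r + (((n : ℝ) - 1) / r + deriv w r / w r) * deriv U r = -1) ∧
    U a = 0 ∧ U b = 0 ∧
    deriv U b = -((b - a) / 2) ∧ deriv U a = (b - a) / 2 := by
  replace hU : U = torsionProfile a b := hU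
  subst hU hw
  refine ⟨fun r hr => ?_, by simp [torsionProfile], by simp [torsionProfile],
    by rw [deriv_torsionProfile]; ring, by rw [deriv_torsionProfile]; ring⟩
  have hr : 0 < r := ha.trans hr.1
  have weights_cancel : ((n : ℝ) - 1) / r + (1 - n) / r = 0 := by ring
  rw [deriv_deriv_torsionProfile, deriv_rpow_const_div_rpow hr, weights_cancel]
  ring

/-- On the annulus `{a < r < b}` (`0 < a < b`, `n ≥ 2`), the radial function
`u = ½(r−a)(b−r)` satisfies `u'' + ((n−1)/r + w'/w) u' = −1` with the weight
`w(r) = r^{1−n}`, together with `u(a) = u(b) = 0` and `u'(b) = −u'(a) = −(b−a)/2`. -/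
theorem stmt18 (n : ℕ) (hn : 2 ≤ n) (a b : ℝ) (ha : 0 < a) (hab : a < b)
    (U w : ℝ → ℝ)
    (hU : U = fun r => (r - a) * (b - r) / 2)
    (hw : w = fun r => r ^ ((1 : ℝ) - (n : ℝ))) :
    (∀ r ∈ Ioo a b,
      deriv (deriv U) r + (((n : ℝ) - 1) / r + deriv w r / w r) * deriv U r = -1) ∧
    U a = 0 ∧ U b = 0 ∧
    deriv U b = -((b - a) / 2) ∧ deriv U a = (b - a) / 2 :=
  stmt18_general n a b ha U w hU hw
end

section
/- Let n ≥ 1, β ∈ ℝ \ {−1, 1}, and 0 < a < b. The compatibility condition (1/b^β + 1/a^β) ∫_a^b r^{−β} (∫_a^r s^β ds) dr = (1/b^β) (∫_a^b r^{−β} dr)(∫_a^b s^β ds) holds if and only if (ρ^{1−β} − 1)/(1−β) = (ρ−1)(ρ^{−β} + 1)/2, where ρ = b/a. -/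
/-!
Computing the inner integral, the left-hand side becomes an affine expression in
`J = ∫_a^b r^{-β} dr`, and the condition collapses to `J = (b - a)(a^{-β} + b^{-β}) / 2`:
the trapezoidal rule is exact for `r ↦ r^{-β}` on `[a, b]`. Both sides of this equation
are `a^{1-β}` times the corresponding sides of the equation in `ρ = b / a`.
-/

open intervalIntegral

namespace Real

variable {a b : ℝ}

lemma integral_rpow_of_pos (β : ℝ) (hβ : β ≠ -1) (ha : 0 < a) (hb : 0 < b) :
    ∫ s in a..b, s ^ β = (b ^ (β + 1) - a ^ (β + 1)) / (β + 1) :=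
  integral_rpow (Or.inr ⟨hβ, Set.notMem_uIcc_of_lt ha hb⟩)

lemma integral_rpow_neg_mul_integral_rpow {β : ℝ} (hβ : β ≠ -1) (ha : 0 < a) (hb : 0 < b) :
    ∫ r in a..b, r ^ (-β) * ∫ s in a..r, s ^ β
      = ((b ^ 2 - a ^ 2) / 2 - a ^ (β + 1) * ∫ r in a..b, r ^ (-β)) / (β + 1) := by
  have inner : Set.EqOn (fun r => r ^ (-β) * ∫ s in a..r, s ^ β)
      (fun r => (r - a ^ (β + 1) * r ^ (-β)) / (β + 1)) (Set.uIcc a b) := by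
    intro r hr
    have hr0 : 0 < r := (lt_min ha hb).trans_le hr.1
    simp only
    rw [integral_rpow_of_pos β hβ ha hr0, mul_div_assoc', mul_sub, ← rpow_add hr0,
      neg_add_cancel_left, rpow_one, mul_comm]
  have hint : IntervalIntegrable (fun r : ℝ => r ^ (-β)) MeasureTheory.volume a b :=
    intervalIntegrable_rpow (Or.inr (Set.notMem_uIcc_of_lt ha hb))
  rw [integral_congr inner, integral_div, integral_sub intervalIntegrable_id
    (hint.const_mul _), integral_id, integral_const_mul]

lemma compatibility_iff_trapezoid {β : ℝ} (hβ : β ≠ -1) (ha : 0 < a) (hb : 0 < b) :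
    ((1 / b ^ β + 1 / a ^ β) * ∫ r in a..b, r ^ (-β) * ∫ s in a..r, s ^ β)
        = (1 / b ^ β) * (∫ r in a..b, r ^ (-β)) * (∫ s in a..b, s ^ β)
      ↔ ∫ r in a..b, r ^ (-β) = (b - a) * (1 / a ^ β + 1 / b ^ β) / 2 := by
  have hβ' : β + 1 ≠ 0 := fun h => hβ (by linarith)
  have hA : 0 < a ^ β := rpow_pos_of_pos ha β
  have hB : 0 < b ^ β := rpow_pos_of_pos hb β
  rw [integral_rpow_neg_mul_integral_rpow hβ ha hb, integral_rpow_of_pos β hβ ha hb,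
    rpow_add ha, rpow_add hb, rpow_one, rpow_one]
  set J := ∫ r in a..b, r ^ (-β)
  have factor :
      (1 / b ^ β + 1 / a ^ β) * (((b ^ 2 - a ^ 2) / 2 - a ^ β * a * J) / (β + 1))
          - 1 / b ^ β * J * ((b ^ β * b - a ^ β * a) / (β + 1))
        = (a + b) / (β + 1) * ((b - a) * (1 / a ^ β + 1 / b ^ β) / 2 - J) := by
    field_simp
    ring
  have hk : (a + b) / (β + 1) ≠ 0 := div_ne_zero (by positivity) hβ'
  rw [← sub_eq_zero, factor, mul_eq_zero, or_iff_right hk, sub_eq_zero, eq_comm]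

lemma integral_rpow_neg_eq_trapezoid_iff {β : ℝ} (hβ : β ≠ 1) (ha : 0 < a) (hb : 0 < b) :
    ∫ r in a..b, r ^ (-β) = (b - a) * (1 / a ^ β + 1 / b ^ β) / 2
      ↔ ((b / a) ^ (1 - β) - 1) / (1 - β) = (b / a - 1) * ((b / a) ^ (-β) + 1) / 2 := by
  obtain ⟨ρ, hρ, rfl⟩ : ∃ ρ, 0 < ρ ∧ b = a * ρ := ⟨b / a, div_pos hb ha, by field_simp⟩
  have hβ' : -β ≠ -1 := fun h => hβ (by linarith)
  have hA : 0 < a ^ β := rpow_pos_of_pos ha β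
  have hP : 0 < ρ ^ β := rpow_pos_of_pos hρ β
  rw [integral_rpow_of_pos (-β) hβ' ha hb, mul_div_cancel_left₀ ρ ha.ne', neg_add_eq_sub,
    mul_rpow ha.le hρ.le, mul_rpow ha.le hρ.le, rpow_sub ha, rpow_sub hρ, rpow_neg hρ.le,
    rpow_one, rpow_one]
  have hscale : 0 < a / a ^ β := div_pos ha hA
  have scaleL : (a / a ^ β * (ρ / ρ ^ β) - a / a ^ β) / (1 - β)
      = a / a ^ β * ((ρ / ρ ^ β - 1) / (1 - β)) := by
    ring
  have scaleR : (a * ρ - a) * (1 / a ^ β + 1 / (a ^ β * ρ ^ β)) / 2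
      = a / a ^ β * ((ρ - 1) * ((ρ ^ β)⁻¹ + 1) / 2) := by
    field_simp
    ring
  rw [scaleL, scaleR, mul_right_inj' hscale.ne']

end Real

theorem stmt19_general (β a b : ℝ)
    (hβ1 : β ≠ -1) (hβ2 : β ≠ 1) (ha : 0 < a) (hab : a < b) :
    ((1 / b ^ β + 1 / a ^ β) *
        ∫ r in a..b, r ^ (-β) * ∫ s in a..r, s ^ β)
      = (1 / b ^ β) * (∫ r in a..b, r ^ (-β)) * (∫ s in a..b, s ^ β)
    ↔ ((b / a) ^ (1 - β) - 1) / (1 - β) = (b / a - 1) * ((b / a) ^ (-β) + 1) / 2 := by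
  have hb : 0 < b := ha.trans hab
  rw [Real.compatibility_iff_trapezoid hβ1 ha hb, Real.integral_rpow_neg_eq_trapezoid_iff hβ2 ha hb]

/-- For `0 < a < b` and `β ∉ {−1,1}`, the compatibility condition
`(1/b^β + 1/a^β) ∫_a^b r^{−β} (∫_a^r s^β ds) dr = (1/b^β)(∫_a^b r^{−β} dr)(∫_a^b s^β ds)`
holds if and only if `(ρ^{1−β} − 1)/(1−β) = (ρ−1)(ρ^{−β} + 1)/2`, where `ρ = b/a`. -/
theorem stmt19 (n : ℕ) (hn : 1 ≤ n) (β a b : ℝ)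
    (hβ1 : β ≠ -1) (hβ2 : β ≠ 1) (ha : 0 < a) (hab : a < b) :
    ((1 / b ^ β + 1 / a ^ β) *
        ∫ r in a..b, r ^ (-β) * ∫ s in a..r, s ^ β)
      = (1 / b ^ β) * (∫ r in a..b, r ^ (-β)) * (∫ s in a..b, s ^ β)
    ↔ ((b / a) ^ (1 - β) - 1) / (1 - β) = (b / a - 1) * ((b / a) ^ (-β) + 1) / 2 :=
  stmt19_general β a b hβ1 hβ2 ha hab
end
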